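/- As x → 1 from the right, the expression −(1/576)·φ(x)·( 1 + 1152·f₂(x) ), where f₂(x) = a₁(x) + 1/576, φ(x) = ζ(x)/(x²−1), a₁(x) = (1/1152)·[ (145 + 249x² − 9x⁴)/(x²−1)³ − 7x(x²−6)/((x²−1)^{3/2}·ζ(x)^{3/2}) − 455/(4·ζ(x)³) ], and ζ(x) = ( (3/4)·( x·√(x²−1) − arcosh x ) )^{2/3}, tends to (29/2400)·2^{−2/3}. -/

import Mathlib

/-!
Substituting `x = cosh t` turns `√(x² - 1)` into `sinh t` and `arcosh x` into `t`, so that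
`ζ^{3/2} = (3/4)(cosh t sinh t - t)`, and the expression becomes a continuous function of
`sinh t / t`, `ζ^{3/2} / t³` and `N(t) / t¹²`, where `N` is the numerator of `a₁` over the common
denominator `4608 sinh⁶ t ζ³`. Up to a constant factor each of `sinh t`, `ζ^{3/2}` and `N` is an
exponential polynomial `∑ pₖ(t) e^{kt}` with integer data, whose first nonzero Taylor coefficient
at `0` (of order 1, 3 and 12) is found by differentiating symbolically; iterated l'Hôpital turns
these coefficients into the three limits `1`, `1/2` and `-249/25`.
-/

open Real Filter

/-- The inverse hyperbolic cosine, `arcosh x = log (x + √(x² - 1))`. -/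
noncomputable def arcosh (x : ℝ) : ℝ := Real.log (x + Real.sqrt (x ^ 2 - 1))

/-- The variable `ζ(x) = ((3/4)(x√(x²-1) - arcosh x))^{2/3}` for `x ≥ 1`. -/
noncomputable def zeta (x : ℝ) : ℝ :=
  ((3 / 4) * (x * Real.sqrt (x ^ 2 - 1) - _root_.arcosh x)) ^ ((2 : ℝ) / 3)

/-- The coefficient function
`a₁(x) = (1/1152)·[(145+249x²-9x⁴)/(x²-1)³ - 7x(x²-6)/((x²-1)^{3/2}ζ^{3/2}) - 455/(4ζ³)]`. -/
noncomputable def a1 (x : ℝ) : ℝ :=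
  (1 / 1152) *
    ((145 + 249 * x ^ 2 - 9 * x ^ 4) / (x ^ 2 - 1) ^ 3 -
      7 * x * (x ^ 2 - 6) / ((x ^ 2 - 1) ^ ((3 : ℝ) / 2) * zeta x ^ ((3 : ℝ) / 2)) -
      455 / (4 * zeta x ^ 3))

/-- The function `φ(x) = ζ(x)/(x² - 1)`. -/
noncomputable def phi (x : ℝ) : ℝ := zeta x / (x ^ 2 - 1)

/-- The coefficient function `f₂ = a₁ + 1/576`. -/
noncomputable def f2 (x : ℝ) : ℝ := a1 x + 1 / 576

open scoped Nat Topology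

theorem tendsto_div_pow_nhdsGT_zero_of_hasDerivAt {F : ℕ → ℝ → ℝ}
    (hF : ∀ m t, HasDerivAt (F m) (F (m + 1) t) t) (n : ℕ) (hvanish : ∀ m < n, F m 0 = 0) :
    Tendsto (fun t => F 0 t / t ^ n) (𝓝[>] 0) (𝓝 (F n 0 / n !)) := by
  induction n generalizing F with
  | zero =>
    simpa using ((hF 0 0).continuousAt.tendsto).mono_left nhdsWithin_le_nhds
  | succ n ih =>
    have hshift := ih (F := fun m => F (m + 1)) (fun m t => hF (m + 1) t)
      (fun m hm => hvanish (m + 1) (by omega))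
    refine HasDerivAt.lhopital_zero_nhdsGT (f' := F 1) (g' := fun t => (n + 1 : ℝ) * t ^ n)
      (Eventually.of_forall (hF 0)) (Eventually.of_forall fun t => ?_) ?_ ?_ ?_ ?_
    · simpa using hasDerivAt_pow (n + 1) t
    · filter_upwards [self_mem_nhdsWithin] with t (ht : 0 < t)
      positivity
    · simpa [hvanish 0 (by omega)] using ((hF 0 0).continuousAt.tendsto).mono_left
        (nhdsWithin_le_nhds (s := Set.Ioi 0))
    · simpa using ((continuous_pow (n + 1)).tendsto (0 : ℝ)).mono_left
        (nhdsWithin_le_nhds (s := Set.Ioi 0))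
    · convert hshift.div_const (n + 1 : ℝ) using 1
      · ext t
        rw [div_div, mul_comm]
      · rw [Nat.factorial_succ, Nat.cast_mul, Nat.cast_succ, div_div, mul_comm]

/-- The term `(c₀ + c₁ t + c₂ t²) e^{rate · t}`. Its data are integers so that `decide` can
compute the Taylor coefficients at `0` of a sum of such terms. -/
structure ExpTerm where
  rate : ℤ
  c₀ : ℤ
  c₁ : ℤ
  c₂ : ℤ

abbrev ExpPoly := List ExpTerm

namespace ExpTerm

noncomputable def eval (a : ExpTerm) (t : ℝ) : ℝ :=
  (a.c₀ + a.c₁ * t + a.c₂ * t ^ 2) * exp (a.rate * t)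

def deriv (a : ExpTerm) : ExpTerm :=
  ⟨a.rate, a.c₁ + a.rate * a.c₀, 2 * a.c₂ + a.rate * a.c₁, a.rate * a.c₂⟩

theorem hasDerivAt_eval (a : ExpTerm) (t : ℝ) : HasDerivAt a.eval (a.deriv.eval t) t := by
  have hpoly : HasDerivAt (fun t : ℝ => a.c₀ + a.c₁ * t + a.c₂ * t ^ 2)
      (a.c₁ + a.c₂ * (2 * t)) t := by
    simpa using (((hasDerivAt_id t).const_mul (a.c₁ : ℝ)).const_add (a.c₀ : ℝ)).fun_add
      ((hasDerivAt_pow 2 t).const_mul (a.c₂ : ℝ))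
  have hexp : HasDerivAt (fun t : ℝ => exp (a.rate * t)) (exp (a.rate * t) * a.rate) t := by
    simpa using ((hasDerivAt_id t).const_mul (a.rate : ℝ)).exp
  refine (hpoly.fun_mul hexp).congr_deriv ?_
  simp only [eval, deriv, Int.cast_add, Int.cast_mul, Int.cast_ofNat]
  ring

end ExpTerm

namespace ExpPoly

noncomputable def eval (L : ExpPoly) (t : ℝ) : ℝ := (L.map (·.eval t)).sum

def deriv (L : ExpPoly) : ExpPoly := L.map ExpTerm.deriv

def valueAtZero (L : ExpPoly) : ℤ := (L.map ExpTerm.c₀).sum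

theorem hasDerivAt_eval (L : ExpPoly) (t : ℝ) : HasDerivAt L.eval (L.deriv.eval t) t := by
  induction L with
  | nil =>
    have hnil : eval [] = fun _ => 0 := by ext; simp [eval]
    simpa [hnil, eval, deriv] using hasDerivAt_const t (0 : ℝ)
  | cons a L ih =>
    have hcons : eval (a :: L) = fun t => a.eval t + eval L t := by
      ext; simp [eval]
    rw [hcons]
    simpa [eval, deriv] using (a.hasDerivAt_eval t).fun_add ih

theorem eval_zero (L : ExpPoly) : L.eval 0 = L.valueAtZero := by
  induction L with
  | nil => simp [eval, valueAtZero]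
  | cons a L ih =>
    simp only [eval, valueAtZero, List.map_cons, List.sum_cons] at ih ⊢
    push_cast
    rw [ih, ExpTerm.eval]
    simp

theorem tendsto_eval_div_pow (L : ExpPoly) (n : ℕ)
    (hvanish : ∀ m < n, (deriv^[m] L).valueAtZero = 0) :
    Tendsto (fun t => L.eval t / t ^ n) (𝓝[>] 0)
      (𝓝 ((deriv^[n] L).valueAtZero / n !)) := by
  have hF : ∀ m t, HasDerivAt (deriv^[m] L).eval ((deriv^[m + 1] L).eval t) t := by
    intro m t
    rw [Function.iterate_succ_apply']
    exact hasDerivAt_eval _ t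
  simpa [eval_zero] using tendsto_div_pow_nhdsGT_zero_of_hasDerivAt hF n
    (fun m hm => by rw [eval_zero, hvanish m hm, Int.cast_zero])

end ExpPoly

theorem exp_intCast_mul (k : ℤ) (t : ℝ) : exp (k * t) = exp t ^ k := by
  rw [mul_comm, exp_mul, rpow_intCast]

def sinhExpPoly : ExpPoly := [⟨1, 1, 0, 0⟩, ⟨-1, -1, 0, 0⟩]

theorem sinhExpPoly_eval (t : ℝ) : sinhExpPoly.eval t = 2 * sinh t := by
  simp only [ExpPoly.eval, sinhExpPoly, ExpTerm.eval, List.map_cons, List.map_nil, List.sum_cons,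
    List.sum_nil, exp_intCast_mul, sinh_eq, exp_neg]
  push_cast
  field_simp
  ring

noncomputable def zetaPowThreeHalves (t : ℝ) : ℝ := 3 / 4 * (cosh t * sinh t - t)

noncomputable def a1Numerator (t : ℝ) : ℝ :=
  4 * (145 + 249 * cosh t ^ 2 - 9 * cosh t ^ 4) * zetaPowThreeHalves t ^ 2 -
    28 * cosh t * (cosh t ^ 2 - 6) * sinh t ^ 3 * zetaPowThreeHalves t - 455 * sinh t ^ 6

def zetaExpPoly : ExpPoly := [⟨2, 3, 0, 0⟩, ⟨-2, -3, 0, 0⟩, ⟨0, 0, -12, 0⟩]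

theorem zetaExpPoly_eval (t : ℝ) : zetaExpPoly.eval t = 16 * zetaPowThreeHalves t := by
  simp only [ExpPoly.eval, zetaExpPoly, ExpTerm.eval, List.map_cons, List.map_nil, List.sum_cons,
    List.sum_nil, exp_intCast_mul, zetaPowThreeHalves, sinh_eq, cosh_eq, exp_neg]
  push_cast
  field_simp
  ring

def a1NumeratorExpPoly : ExpPoly :=
  [⟨-8, -165, 0, 0⟩, ⟨-6, 3376, -984, 0⟩, ⟨-4, 78468, 77184, -1296⟩,
   ⟨-2, -119856, 292104, 138240⟩, ⟨0, 76354, 0, 613152⟩,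
   ⟨2, -119856, -292104, 138240⟩, ⟨4, 78468, -77184, -1296⟩,
   ⟨6, 3376, 984, 0⟩, ⟨8, -165, 0, 0⟩]

theorem a1NumeratorExpPoly_eval (t : ℝ) : a1NumeratorExpPoly.eval t = 1024 * a1Numerator t := by
  simp only [ExpPoly.eval, a1NumeratorExpPoly, ExpTerm.eval, List.map_cons, List.map_nil,
    List.sum_cons, List.sum_nil, exp_intCast_mul, a1Numerator, zetaPowThreeHalves, sinh_eq,
    cosh_eq, exp_neg]
  push_cast
  field_simp
  ring

theorem tendsto_sinh_div_self : Tendsto (fun t => sinh t / t) (𝓝[>] 0) (𝓝 1) := by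
  have h := sinhExpPoly.tendsto_eval_div_pow 1 (by decide)
  rw [show (ExpPoly.deriv^[1] sinhExpPoly).valueAtZero = 2 by decide] at h
  simpa [sinhExpPoly_eval, mul_div_assoc] using h.div_const 2

theorem tendsto_zetaPowThreeHalves_div_pow_three :
    Tendsto (fun t => zetaPowThreeHalves t / t ^ 3) (𝓝[>] 0) (𝓝 (1 / 2)) := by
  have h := zetaExpPoly.tendsto_eval_div_pow 3 (by decide)
  rw [show (ExpPoly.deriv^[3] zetaExpPoly).valueAtZero = 48 by decide] at h
  convert h.div_const 16 using 2 with t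
  · rw [zetaExpPoly_eval]; ring
  · norm_num [Nat.factorial]

theorem tendsto_a1Numerator_div_pow_twelve :
    Tendsto (fun t => a1Numerator t / t ^ 12) (𝓝[>] 0) (𝓝 (-249 / 25)) := by
  have h := a1NumeratorExpPoly.tendsto_eval_div_pow 12 (by decide)
  rw [show (ExpPoly.deriv^[12] a1NumeratorExpPoly).valueAtZero = -4885356478464 by decide] at h
  convert h.div_const 1024 using 2 with t
  · rw [a1NumeratorExpPoly_eval]; ring
  · norm_num [Nat.factorial]

section CoshSubstitution

variable {t : ℝ}

theorem zetaPowThreeHalves_pos (ht : 0 < t) : 0 < zetaPowThreeHalves t := by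
  have hsinh : t < sinh t := self_lt_sinh_iff.2 ht
  have hcosh : sinh t ≤ cosh t * sinh t :=
    le_mul_of_one_le_left (sinh_pos_iff.2 ht).le (one_le_cosh t)
  unfold zetaPowThreeHalves
  linarith

theorem cosh_sq_sub_one : cosh t ^ 2 - 1 = sinh t ^ 2 := by
  rw [cosh_sq]; ring

theorem sqrt_cosh_sq_sub_one (ht : 0 < t) : √(cosh t ^ 2 - 1) = sinh t := by
  rw [cosh_sq_sub_one, sqrt_sq (sinh_pos_iff.2 ht).le]

theorem zeta_cosh (ht : 0 < t) : zeta (cosh t) = zetaPowThreeHalves t ^ (2 / 3 : ℝ) := by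
  have harcosh : _root_.arcosh (cosh t) = t := arcosh_cosh ht.le
  rw [zeta, harcosh, sqrt_cosh_sq_sub_one ht, zetaPowThreeHalves]

theorem a1_cosh (ht : 0 < t) : a1 (cosh t) =
    a1Numerator t / (4608 * sinh t ^ 6 * zetaPowThreeHalves t ^ 2) := by
  have hw := zetaPowThreeHalves_pos ht
  have hs := sinh_pos_iff.2 ht
  have hpow32 : (cosh t ^ 2 - 1) ^ (3 / 2 : ℝ) = sinh t ^ 3 := by
    rw [cosh_sq_sub_one, ← rpow_natCast, ← rpow_mul hs.le]; norm_num
  have hzeta32 : zeta (cosh t) ^ (3 / 2 : ℝ) = zetaPowThreeHalves t := by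
    rw [zeta_cosh ht, ← rpow_mul hw.le]; norm_num
  have hzeta3 : zeta (cosh t) ^ 3 = zetaPowThreeHalves t ^ 2 := by
    rw [zeta_cosh ht, ← rpow_natCast, ← rpow_mul hw.le]; norm_num
  rw [a1, hpow32, hzeta32, hzeta3, cosh_sq_sub_one, a1Numerator]
  field_simp
  ring

theorem phi_f2_combination_cosh (ht : 0 < t) :
    -(1 / 576) * phi (cosh t) * (1 + 1152 * f2 (cosh t)) =
      -(1 / 576) * (zetaPowThreeHalves t / t ^ 3) ^ (2 / 3 : ℝ) / (sinh t / t) ^ 2 *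
        (3 + a1Numerator t / t ^ 12 /
          (4 * (sinh t / t) ^ 6 * (zetaPowThreeHalves t / t ^ 3) ^ 2)) := by
  have hw := zetaPowThreeHalves_pos ht
  have hs := sinh_pos_iff.2 ht
  have hcube : (t ^ 3) ^ (2 / 3 : ℝ) = t ^ 2 := by
    rw [← rpow_natCast, ← rpow_mul ht.le]; norm_num
  rw [phi, f2, a1_cosh ht, zeta_cosh ht, cosh_sq_sub_one, div_rpow hw.le (by positivity), hcube]
  field_simp
  ring

end CoshSubstitution

theorem tendsto_phi_f2_combination_cosh :
    Tendsto (fun t => -(1 / 576) * phi (cosh t) * (1 + 1152 * f2 (cosh t))) (𝓝[>] 0)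
      (𝓝 ((29 / 2400) * (2 : ℝ) ^ (-(2 : ℝ) / 3))) := by
  have hs := tendsto_sinh_div_self
  have hw := tendsto_zetaPowThreeHalves_div_pow_three
  have hlim := (((tendsto_const_nhds (x := -(1 / 576 : ℝ))).mul
    (hw.rpow_const (p := 2 / 3) (Or.inr (by norm_num)))).div (hs.pow 2) (by norm_num)).mul
    ((tendsto_const_nhds (x := (3 : ℝ))).add (tendsto_a1Numerator_div_pow_twelve.div
      (((tendsto_const_nhds (x := (4 : ℝ))).mul (hs.pow 6)).mul (hw.pow 2)) (by norm_num)))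
  have hvalue : (2 : ℝ) ^ (-(2 : ℝ) / 3) = (1 / 2) ^ (2 / 3 : ℝ) := by
    rw [neg_div, rpow_neg zero_le_two, ← inv_rpow zero_le_two, one_div]
  rw [hvalue]
  refine (hlim.congr' ?_).trans_eq ?_
  · filter_upwards [self_mem_nhdsWithin] with t (ht : 0 < t)
    exact (phi_f2_combination_cosh ht).symm
  · norm_num
    ring

theorem tendsto_arcosh_nhdsGT_one : Tendsto Real.arcosh (𝓝[>] 1) (𝓝[>] 0) := by
  refine tendsto_nhdsWithin_iff.2 ⟨?_, ?_⟩
  · have h := (continuousOn_arcosh.continuousWithinAt Set.self_mem_Ici).mono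
      Set.Ioi_subset_Ici_self
    rwa [ContinuousWithinAt, arcosh_zero] at h
  · filter_upwards [self_mem_nhdsWithin] with x hx using arcosh_pos hx

theorem tendsto_phi_f2_combination :
    Tendsto (fun x : ℝ => -(1 / 576) * phi x * (1 + 1152 * f2 x))
      (nhdsWithin 1 (Set.Ioi 1))
      (nhds ((29 / 2400) * (2 : ℝ) ^ (-(2 : ℝ) / 3))) := by
  refine (tendsto_phi_f2_combination_cosh.comp tendsto_arcosh_nhdsGT_one).congr' ?_
  filter_upwards [self_mem_nhdsWithin] with x (hx : 1 < x)
  simp only [Function.comp_apply, cosh_arcosh hx.le]
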